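/- arXiv:1911.07956 — 5 statements merged into one kernel-verified Lean document; each statement's English description precedes it below -/
import Mathlib

section
/- Let h(w,g) = (1/2)‖g·A w/‖w‖ − y‖² with A ∈ ℝ^{m×d} full row rank (so λ_min(AAᵀ) > 0). If (w,g) with w ≠ 0 is a stationary point of h (both partial derivatives vanish), then either h(w,g) = 0, or g = 0 and yᵀ A w = 0. -/
/-!
Write `r = (g / ‖w‖) • A w - y` for the residual. Stationarity in `g` says `⟪r, A w⟫ = 0`; if
`g = 0` then `r = -y` and this is the second alternative. Otherwise the derivative in `w` in
the direction `v` is `(g / ‖w‖) ⟪r, A v⟫ + (∂_v (g / ‖·‖)) ⟪r, A w⟫`, whose second term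
vanishes, so `Aᵀ r = 0`; positivity of `A Aᵀ` then forces `r = 0`, i.e. `h w g = 0`.
-/

open InnerProductSpace RealInnerProductSpace

section
variable {E F : Type*} [NormedAddCommGroup E] [InnerProductSpace ℝ E]
  [NormedAddCommGroup F] [InnerProductSpace ℝ F]

theorem deriv_half_norm_sq_smul_sub (v y : F) (t : ℝ) :
    deriv (fun s : ℝ => (1 / 2) * ‖s • v - y‖ ^ 2) t = ⟪t • v - y, v⟫ := by
  have hline : HasDerivAt (fun s : ℝ => s • v - y) v t := by
    simpa using ((hasDerivAt_id t).smul_const v).sub_const y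
  rw [(hline.norm_sq.const_mul (1 / 2)).deriv]
  ring

theorem fderiv_half_norm_sq_smul_apply_sub_apply {c : E → ℝ} {w : E}
    (hc : DifferentiableAt ℝ c w) (A : E →L[ℝ] F) (y : F) (v : E) :
    fderiv ℝ (fun x => (1 / 2) * ‖c x • A x - y‖ ^ 2) w v =
      c w * ⟪c w • A w - y, A v⟫ + fderiv ℝ c w v * ⟪c w • A w - y, A w⟫ := by
  have hres : HasFDerivAt (fun x => c x • A x - y)
      (c w • A + (fderiv ℝ c w).smulRight (A w)) w :=
    (hc.hasFDerivAt.smul A.hasFDerivAt).sub_const y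
  rw [(hres.norm_sq.const_mul (1 / 2)).fderiv]
  simp only [smul_apply, ContinuousLinearMap.comp_apply, add_apply,
    ContinuousLinearMap.smulRight_apply, innerSL_apply_apply, inner_add_right,
    real_inner_smul_right, smul_eq_mul, nsmul_eq_mul]
  ring

variable [CompleteSpace E] [CompleteSpace F]

theorem adjoint_apply_eq_zero_of_fderiv_half_norm_sq_eq_zero {c : E → ℝ} {w : E}
    (hc : DifferentiableAt ℝ c w) (hcw : c w ≠ 0) {A : E →L[ℝ] F} {y : F}
    (hstat : fderiv ℝ (fun x => (1 / 2) * ‖c x • A x - y‖ ^ 2) w = 0)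
    (horth : ⟪c w • A w - y, A w⟫ = 0) :
    ContinuousLinearMap.adjoint A (c w • A w - y) = 0 := by
  set r := c w • A w - y
  have hdir := congrArg (· (ContinuousLinearMap.adjoint A r)) hstat
  simp only [zero_apply] at hdir
  rw [fderiv_half_norm_sq_smul_apply_sub_apply hc, horth, mul_zero, add_zero,
    ← ContinuousLinearMap.adjoint_inner_left] at hdir
  exact inner_self_eq_zero.mp ((mul_eq_zero.mp hdir).resolve_left hcw)

theorem ContinuousLinearMap.adjoint_injective_of_inner_pos {A : E →L[ℝ] F}
    (hA : ∀ v : F, v ≠ 0 → 0 < ⟪A (adjoint A v), v⟫) :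
    Function.Injective (adjoint A) := by
  refine (injective_iff_map_eq_zero _).mpr fun r hr => ?_
  by_contra hr0
  simpa [hr] using hA r hr0

end

/-- For `h(w,g) = ½‖(g/‖w‖)·Aw − y‖²` with `AAᵀ` positive definite, any
stationary point `(w,g)` with `w ≠ 0` (both partial derivatives vanish) satisfies either
`h(w,g) = 0`, or `g = 0` and `yᵀ A w = 0`. -/
theorem stmt1 (m d : ℕ)
    (A : EuclideanSpace ℝ (Fin d) →L[ℝ] EuclideanSpace ℝ (Fin m))
    (hA : ∀ v : EuclideanSpace ℝ (Fin m), v ≠ 0 →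
      0 < (inner ℝ (A ((ContinuousLinearMap.adjoint A) v)) v : ℝ))
    (y : EuclideanSpace ℝ (Fin m))
    (h : EuclideanSpace ℝ (Fin d) → ℝ → ℝ)
    (hdef : ∀ w g, h w g = (1/2) * ‖(g / ‖w‖) • (A w) - y‖^2)
    (w : EuclideanSpace ℝ (Fin d)) (g : ℝ) (hw : w ≠ 0)
    (hstatw : fderiv ℝ (fun w' => h w' g) w = 0)
    (hstatg : deriv (fun g' => h w g') g = 0) :
    h w g = 0 ∨ (g = 0 ∧ (inner ℝ y (A w) : ℝ) = 0) := by
  have hnorm : ‖w‖ ≠ 0 := norm_ne_zero_iff.mpr hw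
  set r := (g / ‖w‖) • A w - y with hr
  have hr_Aw : ⟪r, A w⟫ = 0 := by
    have hg : deriv (fun g' => (1 / 2) * ‖g' • (‖w‖⁻¹ • A w) - y‖ ^ 2) g = 0 := by
      simpa only [hdef, smul_smul, div_eq_mul_inv] using hstatg
    rw [deriv_half_norm_sq_smul_sub, smul_smul, ← div_eq_mul_inv, real_inner_smul_right] at hg
    exact (mul_eq_zero.mp hg).resolve_left (inv_ne_zero hnorm)
  rcases eq_or_ne g 0 with rfl | hg
  · right
    simpa [hr] using hr_Aw
  · left
    have hc : DifferentiableAt ℝ (fun x => g / ‖x‖) w := by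
      have : DifferentiableAt ℝ (fun x : EuclideanSpace ℝ (Fin d) => ‖x‖) w :=
        differentiableAt_id.norm ℝ hw
      fun_prop (disch := exact hnorm)
    have hadj : ContinuousLinearMap.adjoint A r = 0 :=
      adjoint_apply_eq_zero_of_fderiv_half_norm_sq_eq_zero hc (div_ne_zero hg hnorm)
        (by simpa only [hdef] using hstatw) hr_Aw
    have hr0 : r = 0 :=
      ContinuousLinearMap.adjoint_injective_of_inner_pos hA (hadj.trans (map_zero _).symm)
    rw [hdef, ← hr, hr0]
    norm_num
end

section
/- Let h(w,g) = (1/2)‖g·Aw/‖w‖ − y‖² with AAᵀ positive definite. If (w,g) is a stationary point of h with ‖Agw/‖w‖ − y‖² < ‖y‖², then h(w,g) = 0. -/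
set_option autoImplicit false

open RealInnerProductSpace

/-! Write `r = (g/‖w‖)·Aw − y` for the residual. Stationarity in `g` makes `r ⟂ Aw`. The
derivative of `w ↦ (g/‖w‖)·Aw` at `w` in direction `v` is `(g/‖w‖)·Av` plus a multiple of `Aw`,
so stationarity in `w` gives `(g/‖w‖)⟪r, Av⟫ = 0` for all `v`. The loss condition rules out
`g = 0`, hence `Aᵀr = 0`, and positive definiteness of `AAᵀ` forces `r = 0`. -/

section

variable {E F : Type*} [NormedAddCommGroup E] [InnerProductSpace ℝ E]
  [NormedAddCommGroup F] [InnerProductSpace ℝ F]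

theorem fderiv_half_norm_sq_apply {φ : E → F} {φ' : E →L[ℝ] F} {x : E}
    (hφ : HasFDerivAt φ φ' x) (v : E) :
    fderiv ℝ (fun x => (1/2 : ℝ) * ‖φ x‖ ^ 2) x v = ⟪φ x, φ' v⟫ := by
  rw [(hφ.norm_sq.const_mul (1/2 : ℝ)).fderiv]
  simp only [FunLike.coe_smul, Pi.smul_apply, ContinuousLinearMap.comp_apply,
    innerSL_apply_apply, smul_eq_mul]
  ring

theorem deriv_half_norm_sq {φ : ℝ → F} {φ' : F} {t : ℝ} (hφ : HasDerivAt φ φ' t) :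
    deriv (fun t => (1/2 : ℝ) * ‖φ t‖ ^ 2) t = ⟪φ t, φ'⟫ := by
  rw [(hφ.norm_sq.const_mul (1/2 : ℝ)).deriv]
  ring

variable (A : E →L[ℝ] F) (y : F) {w : E} {g : ℝ}

theorem inner_residual_apply_self_eq_zero (hw : w ≠ 0)
    (hcrit : deriv (fun g' => (1/2 : ℝ) * ‖(g' / ‖w‖) • A w - y‖ ^ 2) g = 0) :
    ⟪(g / ‖w‖) • A w - y, A w⟫ = 0 := by
  have hφ : HasDerivAt (fun g' => (g' / ‖w‖) • A w - y) ((1 / ‖w‖) • A w) g :=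
    (((hasDerivAt_id g).div_const ‖w‖).smul_const (A w)).sub_const y
  rw [deriv_half_norm_sq hφ, real_inner_smul_right] at hcrit
  exact (mul_eq_zero.1 hcrit).resolve_left (one_div_ne_zero (norm_ne_zero_iff.2 hw))

theorem mul_inner_residual_apply_eq_zero (hw : w ≠ 0)
    (hperp : ⟪(g / ‖w‖) • A w - y, A w⟫ = 0)
    (hcrit : fderiv ℝ (fun w' => (1/2 : ℝ) * ‖(g / ‖w'‖) • A w' - y‖ ^ 2) w = 0) (v : E) :
    g / ‖w‖ * ⟪(g / ‖w‖) • A w - y, A v⟫ = 0 := by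
  have hscale : DifferentiableAt ℝ (fun w' : E => g / ‖w'‖) w :=
    (((contDiffAt_norm ℝ hw).differentiableAt one_ne_zero).inv (norm_ne_zero_iff.2 hw)).const_mul g
  have hφ : HasFDerivAt (fun w' => (g / ‖w'‖) • A w' - y)
      ((g / ‖w‖) • A + (fderiv ℝ (fun w' : E => g / ‖w'‖) w).smulRight (A w)) w :=
    (hscale.hasFDerivAt.smul A.hasFDerivAt).sub_const y
  have hv := fderiv_half_norm_sq_apply hφ v
  rw [hcrit] at hv
  simpa [inner_add_right, real_inner_smul_right, hperp] using hv.symm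

end

theorem eq_zero_of_forall_inner_apply_eq_zero {E F : Type*}
    [NormedAddCommGroup E] [InnerProductSpace ℝ E] [CompleteSpace E]
    [NormedAddCommGroup F] [InnerProductSpace ℝ F] [CompleteSpace F] (A : E →L[ℝ] F)
    (hA : ∀ v : F, v ≠ 0 → 0 < ⟪A (ContinuousLinearMap.adjoint A v), v⟫)
    {r : F} (hr : ∀ x, ⟪r, A x⟫ = 0) : r = 0 := by
  by_contra hne
  have hpos := hA r hne
  rw [real_inner_comm, hr] at hpos
  exact lt_irrefl 0 hpos

/-- For `h(w,g) = ½‖(g/‖w‖)·Aw − y‖²` with `AAᵀ` positive definite, a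
stationary point `(w,g)` whose loss is strictly below the loss at `g = 0`
(`‖(g/‖w‖)·Aw − y‖² < ‖y‖²`) is a global minimum: `h(w,g) = 0`. -/
theorem stmt2 (m d : ℕ)
    (A : EuclideanSpace ℝ (Fin d) →L[ℝ] EuclideanSpace ℝ (Fin m))
    (hA : ∀ v : EuclideanSpace ℝ (Fin m), v ≠ 0 →
      0 < (inner ℝ (A ((ContinuousLinearMap.adjoint A) v)) v : ℝ))
    (y : EuclideanSpace ℝ (Fin m))
    (h : EuclideanSpace ℝ (Fin d) → ℝ → ℝ)
    (hdef : ∀ w g, h w g = (1/2) * ‖(g / ‖w‖) • (A w) - y‖^2)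
    (w : EuclideanSpace ℝ (Fin d)) (g : ℝ) (hw : w ≠ 0)
    (hstatw : fderiv ℝ (fun w' => h w' g) w = 0)
    (hstatg : deriv (fun g' => h w g') g = 0)
    (hloss : ‖(g / ‖w‖) • (A w) - y‖^2 < ‖y‖^2) :
    h w g = 0 := by
  obtain rfl : h = fun w g => (1/2) * ‖(g / ‖w‖) • (A w) - y‖^2 := funext fun w => funext (hdef w)
  have hg : g ≠ 0 := by
    rintro rfl
    simp at hloss
  have hperp := inner_residual_apply_self_eq_zero A y hw hstatg
  have hscale : g / ‖w‖ ≠ 0 := div_ne_zero hg (norm_ne_zero_iff.2 hw)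
  have hres := eq_zero_of_forall_inner_apply_eq_zero A hA fun v =>
    (mul_eq_zero.1 (mul_inner_residual_apply_eq_zero A y hw hperp hstatw v)).resolve_left hscale
  simp [hres]
end

section
/- Under rPGD with AAᵀ = I and η = 1/g_t²: ‖A w_{t+1}‖² = (g*)² / ((g*)² + g_t²(1 − ‖A w_t‖²)), where w_{t+1} = v_t/‖v_t‖ and v_t = w_t − (1/g_t)Aᵀr_t. -/
/-!
Since `A A† = 1`, the map `P = A† A` is the orthogonal projection onto `(ker A)ᗮ`, which contains
`w*`. Hence `v = (w - P w) + (g* / g) w*` is an orthogonal decomposition, so that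
`‖v‖² = 1 - ‖A w‖² + (g* / g)²`, while `A v = (g* / g) A w*` with `‖A w*‖ = ‖w*‖ = 1`.
-/

open scoped InnerProductSpace

namespace ContinuousLinearMap

variable {E F : Type*} [NormedAddCommGroup E] [InnerProductSpace ℝ E] [CompleteSpace E]
  [NormedAddCommGroup F] [InnerProductSpace ℝ F] [CompleteSpace F]
  {A : E →L[ℝ] F}

lemma apply_adjoint_apply_of_comp_adjoint_eq_id (hA : A ∘L adjoint A = .id ℝ F) (y : F) :
    A (adjoint A y) = y :=
  DFunLike.congr_fun hA y

lemma norm_apply_sq_eq_inner_adjoint_apply (A : E →L[ℝ] F) (x : E) :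
    ‖A x‖ ^ 2 = ⟪x, adjoint A (A x)⟫_ℝ := by
  rw [adjoint_inner_right, real_inner_self_eq_norm_sq]

lemma sub_adjoint_apply_apply_mem_ker (hA : A ∘L adjoint A = .id ℝ F) (x : E) :
    x - adjoint A (A x) ∈ A.ker := by
  simp [apply_adjoint_apply_of_comp_adjoint_eq_id hA]

lemma adjoint_apply_apply_of_mem_orthogonal_ker (hA : A ∘L adjoint A = .id ℝ F) {x : E}
    (hx : x ∈ A.kerᗮ) : adjoint A (A x) = x := by
  have hker : adjoint A (A x) - x ∈ A.ker := by
    simpa using neg_mem (sub_adjoint_apply_apply_mem_ker hA x)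
  have hortho : adjoint A (A x) - x ∈ A.kerᗮ := by
    refine sub_mem ?_ hx
    rw [orthogonal_ker]
    exact Submodule.le_topologicalClosure _ ⟨A x, rfl⟩
  exact sub_eq_zero.mp ((Submodule.orthogonal_disjoint _).eq_bot.le ⟨hker, hortho⟩)

lemma norm_apply_of_mem_orthogonal_ker (hA : A ∘L adjoint A = .id ℝ F) {x : E}
    (hx : x ∈ A.kerᗮ) : ‖A x‖ = ‖x‖ := by
  have := norm_apply_sq_eq_inner_adjoint_apply A x
  rw [adjoint_apply_apply_of_mem_orthogonal_ker hA hx, real_inner_self_eq_norm_sq] at this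
  exact (sq_eq_sq₀ (norm_nonneg _) (norm_nonneg _)).mp this

lemma norm_adjoint_apply (hA : A ∘L adjoint A = .id ℝ F) (y : F) : ‖adjoint A y‖ = ‖y‖ := by
  have := norm_apply_sq_eq_inner_adjoint_apply (adjoint A) y
  rw [adjoint_adjoint, apply_adjoint_apply_of_comp_adjoint_eq_id hA,
    real_inner_self_eq_norm_sq] at this
  exact (sq_eq_sq₀ (norm_nonneg _) (norm_nonneg _)).mp this

lemma norm_sub_adjoint_apply_apply_sq (hA : A ∘L adjoint A = .id ℝ F) (x : E) :
    ‖x - adjoint A (A x)‖ ^ 2 = ‖x‖ ^ 2 - ‖A x‖ ^ 2 := by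
  rw [norm_sub_sq_real, ← norm_apply_sq_eq_inner_adjoint_apply, norm_adjoint_apply hA]
  ring

end ContinuousLinearMap

section RPGD

variable {E F : Type*} [NormedAddCommGroup E] [InnerProductSpace ℝ E] [CompleteSpace E]
  [NormedAddCommGroup F] [InnerProductSpace ℝ F] [CompleteSpace F]
  {A : E →L[ℝ] F} {gstar g : ℝ} {wstar : E}

open ContinuousLinearMap

/-- The vector `v_t` of rPGD: a gradient step of size `1 / g²` on
`w ↦ ½ ‖A (g • w - gstar • wstar)‖²`, before normalisation. -/
noncomputable def rpgdStep (A : E →L[ℝ] F) (gstar : ℝ) (wstar : E) (g : ℝ) (w : E) : E :=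
  w - g⁻¹ • adjoint A (A (g • w - gstar • wstar))

variable (hA : A ∘L adjoint A = .id ℝ F) (hws : wstar ∈ A.kerᗮ) (hg : g ≠ 0)
include hA hws hg

lemma rpgdStep_eq (w : E) :
    rpgdStep A gstar wstar g w = (w - adjoint A (A w)) + (gstar / g) • wstar := by
  simp only [rpgdStep, map_sub, map_smul, adjoint_apply_apply_of_mem_orthogonal_ker hA hws,
    smul_sub, smul_smul, inv_mul_cancel₀ hg, one_smul, inv_mul_eq_div]
  abel

lemma apply_rpgdStep (w : E) : A (rpgdStep A gstar wstar g w) = (gstar / g) • A wstar := by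
  rw [rpgdStep_eq hA hws hg, map_add, map_sub, apply_adjoint_apply_of_comp_adjoint_eq_id hA,
    sub_self, zero_add, map_smul]

lemma norm_rpgdStep_sq (w : E) :
    ‖rpgdStep A gstar wstar g w‖ ^ 2 = ‖w‖ ^ 2 - ‖A w‖ ^ 2 + (gstar / g) ^ 2 * ‖wstar‖ ^ 2 := by
  have horth : ⟪w - adjoint A (A w), (gstar / g) • wstar⟫_ℝ = 0 :=
    Submodule.inner_right_of_mem_orthogonal (sub_adjoint_apply_apply_mem_ker hA w)
      (Submodule.smul_mem _ _ hws)
  rw [rpgdStep_eq hA hws hg, norm_add_sq_real, horth, mul_zero, add_zero,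
    norm_sub_adjoint_apply_apply_sq hA, norm_smul, mul_pow, Real.norm_eq_abs, sq_abs]

end RPGD

theorem stmt13_general (m d : ℕ)
    (A : EuclideanSpace ℝ (Fin d) →L[ℝ] EuclideanSpace ℝ (Fin m))
    (hA : A.comp (ContinuousLinearMap.adjoint A) =
      ContinuousLinearMap.id ℝ (EuclideanSpace ℝ (Fin m)))
    (gstar : ℝ)
    (wstar : EuclideanSpace ℝ (Fin d)) (hws : ‖wstar‖ = 1)
    (hwsrow : wstar ∈ (LinearMap.ker A.toLinearMap)ᗮ)
    (w : EuclideanSpace ℝ (Fin d)) (hw : ‖w‖ = 1)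
    (gt : ℝ) (hgt : gt ≠ 0)
    (v : EuclideanSpace ℝ (Fin d))
    (hv : v = w - gt⁻¹ • (ContinuousLinearMap.adjoint A) (A (gt • w - gstar • wstar))) :
    ‖A (‖v‖⁻¹ • v)‖^2 = gstar^2 / (gstar^2 + gt^2 * (1 - ‖A w‖^2)) := by
  obtain rfl : v = rpgdStep A gstar wstar gt w := hv
  have hAws : ‖A wstar‖ = 1 := by
    rw [ContinuousLinearMap.norm_apply_of_mem_orthogonal_ker hA hwsrow, hws]
  -- no positivity of `‖v‖` is needed: when `‖v‖ = 0` both sides are junk `x / 0 = 0`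
  have hden : gstar ^ 2 + gt ^ 2 * (1 - ‖A w‖ ^ 2) =
      gt ^ 2 * (1 - ‖A w‖ ^ 2 + (gstar / gt) ^ 2) := by
    field_simp
    ring
  rw [map_smul, norm_smul, mul_pow, norm_inv, norm_norm, inv_pow, apply_rpgdStep hA hwsrow hgt,
    norm_rpgdStep_sq hA hwsrow hgt, norm_smul, hAws, hw, hws, hden, ← div_div, ← div_pow,
    Real.norm_eq_abs, mul_one, sq_abs]
  ring

/-- Under rPGD with `AAᵀ = I` and `η = 1/g_t²`:
`‖A w_{t+1}‖² = (g*)²/((g*)² + g_t²(1 − ‖A w_t‖²))`, with `w_{t+1} = v_t/‖v_t‖` and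
`v_t = w_t − (1/g_t)Aᵀr_t`, `r_t = A(g_t w_t − g* w*)`. -/
theorem stmt13 (m d : ℕ)
    (A : EuclideanSpace ℝ (Fin d) →L[ℝ] EuclideanSpace ℝ (Fin m))
    (hA : A.comp (ContinuousLinearMap.adjoint A) =
      ContinuousLinearMap.id ℝ (EuclideanSpace ℝ (Fin m)))
    (gstar : ℝ) (hgs : 0 < gstar)
    (wstar : EuclideanSpace ℝ (Fin d)) (hws : ‖wstar‖ = 1)
    (hwsrow : wstar ∈ (LinearMap.ker A.toLinearMap)ᗮ)
    (w : EuclideanSpace ℝ (Fin d)) (hw : ‖w‖ = 1)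
    (gt : ℝ) (hgt : gt ≠ 0)
    (v : EuclideanSpace ℝ (Fin d))
    (hv : v = w - gt⁻¹ • (ContinuousLinearMap.adjoint A) (A (gt • w - gstar • wstar))) :
    ‖A (‖v‖⁻¹ • v)‖^2 = gstar^2 / (gstar^2 + gt^2 * (1 - ‖A w‖^2)) :=
  stmt13_general m d A hA gstar wstar hws hwsrow w hw gt hgt v hv
end

section
/- Under rPGD with AAᵀ = I, η = 1/g_t², and update g_{t+1} = g_t − γ⟨A w_t, r_t⟩: if g_t < g_{t−1}‖v_{t−1}‖ and γ > 0, g_{t−1}, g_t > 0, then g_{t+1} > g_t. (The scale parameter is strictly increasing.) -/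
/-!
Since `A` has orthonormal rows and `w*` lies in its row space, `A` is an isometry on `g* w*`,
so `b := A (g* w*)` has norm `g* > 0`. Writing `A w_t = c • b` with `c = 1 / (g_{t-1} ‖v_{t-1}‖)`,
the residual is `r_t = (g_t c - 1) • b`, hence `⟨A w_t, r_t⟩ = c (g_t c - 1) (g*)² < 0` because
`g_t c < 1`; the update therefore increases the scale.
-/

open ContinuousLinearMap

section Isometry

variable {E F : Type*} [NormedAddCommGroup E] [InnerProductSpace ℝ E] [CompleteSpace E]
  [NormedAddCommGroup F] [InnerProductSpace ℝ F] [CompleteSpace F]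

theorem ContinuousLinearMap.norm_apply_eq_of_comp_adjoint_eq_id {A : E →L[ℝ] F}
    (hA : A ∘L adjoint A = ContinuousLinearMap.id ℝ F) {w : E}
    (hw : w ∈ (LinearMap.ker A.toLinearMap)ᗮ) : ‖A w‖ = ‖w‖ := by
  -- `w - A† A w` lies in `ker A`, to which `w` is orthogonal.
  have hker : w - adjoint A (A w) ∈ LinearMap.ker A.toLinearMap := by
    have hAA := congrArg (fun T => T (A w)) hA
    simp only [comp_apply, id_apply] at hAA
    simp [LinearMap.mem_ker, hAA]
  have horth : inner ℝ w (w - adjoint A (A w)) = 0 :=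
    Submodule.inner_left_of_mem_orthogonal hker hw
  have hsq : ‖w‖ ^ 2 = ‖A w‖ ^ 2 := by
    rwa [inner_sub_right, sub_eq_zero, adjoint_inner_right, real_inner_self_eq_norm_sq,
      real_inner_self_eq_norm_sq] at horth
  exact ((sq_eq_sq₀ (norm_nonneg _) (norm_nonneg _)).1 hsq).symm

end Isometry

theorem real_inner_smul_smul_smul_sub_self_neg {F : Type*} [NormedAddCommGroup F]
    [InnerProductSpace ℝ F] {b : F} (hb : b ≠ 0) {c t : ℝ} (hc : 0 < c) (htc : t * c < 1) :
    inner ℝ (c • b) (t • c • b - b) < 0 := by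
  have hexpand : inner ℝ (c • b) (t • c • b - b) = c * (t * c - 1) * ‖b‖ ^ 2 := by
    simp only [inner_sub_right, real_inner_smul_left, real_inner_smul_right]
    rw [real_inner_self_eq_norm_sq]
    ring
  rw [hexpand]
  exact mul_neg_of_neg_of_pos (mul_neg_of_pos_of_neg hc (by linarith))
    (pow_pos (norm_pos_iff.2 hb) 2)

theorem stmt16_general (m d : ℕ)
    (A : EuclideanSpace ℝ (Fin d) →L[ℝ] EuclideanSpace ℝ (Fin m))
    (hA : A.comp (ContinuousLinearMap.adjoint A) =
      ContinuousLinearMap.id ℝ (EuclideanSpace ℝ (Fin m)))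
    (gstar : ℝ) (hgs : 0 < gstar)
    (wstar : EuclideanSpace ℝ (Fin d)) (hws : ‖wstar‖ = 1)
    (hwsrow : wstar ∈ (LinearMap.ker A.toLinearMap)ᗮ)
    (gprev gt γ : ℝ) (hγ : 0 < γ) (hgt : 0 < gt)
    (vprev : EuclideanSpace ℝ (Fin d))
    (wt : EuclideanSpace ℝ (Fin d))
    (hAwt : A wt = (gprev * ‖vprev‖)⁻¹ • A (gstar • wstar))
    (hlt : gt < gprev * ‖vprev‖) :
    gt < gt - γ * (inner ℝ (A wt) (A (gt • wt - gstar • wstar)) : ℝ) := by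
  have hden : 0 < gprev * ‖vprev‖ := hgt.trans hlt
  have hnorm : ‖A (gstar • wstar)‖ = gstar := by
    rw [A.norm_apply_eq_of_comp_adjoint_eq_id hA (Submodule.smul_mem _ gstar hwsrow),
      norm_smul, hws, mul_one, Real.norm_of_nonneg hgs.le]
  have hb : A (gstar • wstar) ≠ 0 := norm_pos_iff.1 (hnorm.symm ▸ hgs)
  have hneg : inner ℝ (A wt) (A (gt • wt - gstar • wstar)) < 0 := by
    rw [map_sub, map_smul, hAwt]
    exact real_inner_smul_smul_smul_sub_self_neg hb (inv_pos.2 hden)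
      ((mul_inv_lt_iff₀ hden).2 (by rwa [one_mul]))
  linarith [mul_pos hγ (neg_pos.2 hneg)]

/-- Under rPGD with `AAᵀ = I`, `η = 1/g_t²`, and scale update
`g_{t+1} = g_t − γ⟨A w_t, r_t⟩` with `r_t = A(g_t w_t − g* w*)`: if
`A w_t = A(g* w*)/(g_{t−1}‖v_{t−1}‖)`, `g_t < g_{t−1}‖v_{t−1}‖`, `γ > 0`, and
`g_{t−1}, g_t > 0`, then `g_{t+1} > g_t` (the scale is strictly increasing). -/
theorem stmt16 (m d : ℕ)
    (A : EuclideanSpace ℝ (Fin d) →L[ℝ] EuclideanSpace ℝ (Fin m))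
    (hA : A.comp (ContinuousLinearMap.adjoint A) =
      ContinuousLinearMap.id ℝ (EuclideanSpace ℝ (Fin m)))
    (gstar : ℝ) (hgs : 0 < gstar)
    (wstar : EuclideanSpace ℝ (Fin d)) (hws : ‖wstar‖ = 1)
    (hwsrow : wstar ∈ (LinearMap.ker A.toLinearMap)ᗮ)
    (gprev gt γ : ℝ) (hγ : 0 < γ) (hgprev : 0 < gprev) (hgt : 0 < gt)
    (vprev : EuclideanSpace ℝ (Fin d)) (hvprev : vprev ≠ 0)
    (wt : EuclideanSpace ℝ (Fin d))
    (hAwt : A wt = (gprev * ‖vprev‖)⁻¹ • A (gstar • wstar))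
    (hlt : gt < gprev * ‖vprev‖) :
    gt < gt - γ * (inner ℝ (A wt) (A (gt • wt - gstar • wstar)) : ℝ) :=
  stmt16_general m d A hA gstar hgs wstar hws hwsrow gprev gt γ hγ hgt vprev wt hAwt hlt
end

section
/- Fix δ > 0. Let A ∈ ℝ^{m×d} have singular values 1 = σ_1 ≥ … ≥ σ_m > 0 of AAᵀ (so λ_max(AAᵀ)=1), and let w* be a unit vector in the row space of A, g* > 0. In rPGD with fixed g = g_0 satisfying g_0 ≤ g* σ_m/(2+δ−σ_m) and stepsize η = 1/g_0², the vector v_t = (I − AᵀA)w_t + (g*/g_0)AᵀA w* satisfies ‖v_t‖ ≥ 1 + δ for every unit vector w_t. Consequently ‖w_{T_1}^⊥‖ ≤ (1+δ)^{−T_1}‖w_0^⊥‖ ≤ ε for T_1 = log(‖w_0^⊥‖/ε)/log(1+δ). -/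
/-!
Split a unit vector `u = y + z` with `y ∈ ker A` and `z ∈ (ker A)ᗮ`. Then
`v = y + (z - AᵀA z) + (g*/g₀) AᵀA w*`, and the last two summands lie in `(ker A)ᗮ`.
On `(ker A)ᗮ` the positive operator `1 - AᵀA` has quadratic form at most `1 - σ_m`, hence norm
at most `1 - σ_m`, while `‖AᵀA w*‖ ≥ σ_m`; so `‖v‖ ≥ (g*/g₀) σ_m - (1 - σ_m) ≥ 1 + δ`.
Since `AᵀA` kills `ker A`, the `ker A`-component of `v_t` is that of `w_t`, and normalising by
`‖v_t‖ ≥ 1 + δ` shrinks it by the factor `(1 + δ)⁻¹` at every step.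
-/

open scoped InnerProduct RealInnerProductSpace

theorem Submodule.norm_le_norm_add_of_mem_orthogonal {E : Type*} [NormedAddCommGroup E]
    [InnerProductSpace ℝ E] {K : Submodule ℝ E} {y z : E} (hy : y ∈ K) (hz : z ∈ Kᗮ) :
    ‖z‖ ≤ ‖y + z‖ := by
  refine (pow_le_pow_iff_left₀ (norm_nonneg _) (norm_nonneg _) two_ne_zero).mp ?_
  rw [norm_add_sq_real, K.inner_right_of_mem_orthogonal hy hz]
  nlinarith [sq_nonneg ‖y‖]

namespace ContinuousLinearMap

theorem IsPositive.norm_apply_le_of_inner_le {E : Type*} [NormedAddCommGroup E]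
    [InnerProductSpace ℝ E] {T : E →L[ℝ] E} (hT : T.IsPositive) {V : Submodule ℝ E}
    (hTV : ∀ x ∈ V, T x ∈ V) {c : ℝ} (hc : ∀ x ∈ V, ⟪T x, x⟫ ≤ c * ‖x‖ ^ 2) {x : E}
    (hx : x ∈ V) : ‖T x‖ ≤ c * ‖x‖ := by
  -- Cauchy–Schwarz for the semi-inner product `⟪T a, b⟫`, applied to `x` and `T x`
  have hcs : ‖T x‖ ^ 2 * ‖T x‖ ^ 2 ≤ ⟪T x, x⟫ * ⟪T (T x), T x⟫ := by
    have hsymm : ⟪T (T x), x⟫ = ‖T x‖ ^ 2 := by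
      rw [← real_inner_self_eq_norm_sq]
      exact hT.isSymmetric _ _
    have := LinearMap.BilinForm.apply_mul_apply_le_of_forall_zero_le
      ((innerₗ E).compl₁₂ (T : E →ₗ[ℝ] E) LinearMap.id) hT.inner_nonneg_left x (T x)
    simpa only [LinearMap.compl₁₂_apply, innerₗ_apply_apply, coe_coe, LinearMap.id_coe, id_eq,
      real_inner_self_eq_norm_sq, hsymm] using this
  have hx₁ := hc x hx
  have hx₂ := hc _ (hTV x hx)
  have hcx : 0 ≤ c * ‖x‖ := by
    rcases (norm_nonneg x).eq_or_lt with h | h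
    · simp [← h]
    · exact mul_nonneg
        (nonneg_of_mul_nonneg_left ((hT.inner_nonneg_left x).trans hx₁) (by positivity)) h.le
  refine (pow_le_pow_iff_left₀ (norm_nonneg _) hcx two_ne_zero).mp ?_
  rcases (norm_nonneg (T x)).eq_or_lt with h | h
  · simpa [← h] using sq_nonneg (c * ‖x‖)
  · refine le_of_mul_le_mul_right ?_ (by positivity : 0 < ‖T x‖ ^ 2)
    nlinarith [hT.inner_nonneg_left (T x), hT.inner_nonneg_left x]

variable {E F : Type*} [NormedAddCommGroup E] [InnerProductSpace ℝ E] [CompleteSpace E]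
  [NormedAddCommGroup F] [InnerProductSpace ℝ F] [CompleteSpace F] {A : E →L[ℝ] F}

theorem adjoint_apply_mem_orthogonal_ker (A : E →L[ℝ] F) (y : F) :
    (A†) y ∈ (LinearMap.ker (A : E →ₗ[ℝ] F))ᗮ :=
  A.orthogonal_ker ▸ Submodule.le_topologicalClosure _ (LinearMap.mem_range_self _ y)

theorem isPositive_one_sub_adjoint_comp_self (hA : ∀ z, ‖A z‖ ≤ ‖z‖) :
    (1 - A† ∘L A).IsPositive := by
  refine isPositive_def'.mpr
    ⟨(IsSelfAdjoint.one (R := E →L[ℝ] E)).sub (isPositive_adjoint_comp_self A).isSelfAdjoint,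
      fun x => ?_⟩
  simp only [reApplyInnerSelf_apply, sub_apply, one_apply_eq_self, comp_apply, inner_sub_left,
    real_inner_self_eq_norm_sq, adjoint_inner_left, RCLike.re_to_real, sub_nonneg]
  nlinarith [hA x, norm_nonneg (A x)]

theorem norm_sub_adjoint_apply_le {σ : ℝ} (hA : ∀ z, ‖A z‖ ≤ ‖z‖)
    (hσ : ∀ z ∈ (LinearMap.ker (A : E →ₗ[ℝ] F))ᗮ, σ * ‖z‖ ^ 2 ≤ ‖A z‖ ^ 2)
    {z : E} (hz : z ∈ (LinearMap.ker (A : E →ₗ[ℝ] F))ᗮ) :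
    ‖z - (A†) (A z)‖ ≤ (1 - σ) * ‖z‖ := by
  refine (isPositive_one_sub_adjoint_comp_self hA).norm_apply_le_of_inner_le
    (fun x hx => ?_) (fun x hx => ?_) hz
  · simpa only [sub_apply, one_apply_eq_self, comp_apply] using
      Submodule.sub_mem _ hx (A.adjoint_apply_mem_orthogonal_ker _)
  · simp only [sub_apply, one_apply_eq_self, comp_apply, inner_sub_left,
      real_inner_self_eq_norm_sq, adjoint_inner_left]
    linarith [hσ x hx]

theorem mul_norm_le_norm_adjoint_apply {σ : ℝ}
    (hσ : ∀ z ∈ (LinearMap.ker (A : E →ₗ[ℝ] F))ᗮ, σ * ‖z‖ ^ 2 ≤ ‖A z‖ ^ 2)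
    {w : E} (hw : w ∈ (LinearMap.ker (A : E →ₗ[ℝ] F))ᗮ) : σ * ‖w‖ ≤ ‖(A†) (A w)‖ := by
  rcases (norm_nonneg w).eq_or_lt with h | h
  · simp [← h]
  refine le_of_mul_le_mul_right ?_ h
  calc σ * ‖w‖ * ‖w‖ ≤ ‖A w‖ ^ 2 := by nlinarith [hσ w hw]
    _ = ⟪(A†) (A w), w⟫ := by rw [A.adjoint_inner_left, real_inner_self_eq_norm_sq]
    _ ≤ ‖(A†) (A w)‖ * ‖w‖ := real_inner_le_norm _ _

end ContinuousLinearMap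

section Direction

variable {E F : Type*} [NormedAddCommGroup E] [InnerProductSpace ℝ E] [CompleteSpace E]
  [NormedAddCommGroup F] [InnerProductSpace ℝ F] [CompleteSpace F]

/-- The vector `v_t` of rPGD, for `u = w_t` and `r = g*/g₀`. -/
noncomputable def rpgdDirection (A : E →L[ℝ] F) (r : ℝ) (wstar u : E) : E :=
  u - (A†) (A u) + r • (A†) (A wstar)

variable {A : E →L[ℝ] F}

theorem orthogonalProjectionOnto_ker_rpgdDirection (r : ℝ) (wstar u : E) :
    (LinearMap.ker (A : E →ₗ[ℝ] F)).orthogonalProjectionOnto (rpgdDirection A r wstar u) =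
      (LinearMap.ker (A : E →ₗ[ℝ] F)).orthogonalProjectionOnto u := by
  simp [rpgdDirection, Submodule.orthogonalProjectionOnto_apply_of_mem_orthogonal,
    A.adjoint_apply_mem_orthogonal_ker]

theorem mul_sub_le_norm_rpgdDirection {σ r : ℝ} {wstar u : E} (hA : ∀ z, ‖A z‖ ≤ ‖z‖)
    (hσ : ∀ z ∈ (LinearMap.ker (A : E →ₗ[ℝ] F))ᗮ, σ * ‖z‖ ^ 2 ≤ ‖A z‖ ^ 2)
    (hw : wstar ∈ (LinearMap.ker (A : E →ₗ[ℝ] F))ᗮ) (hw₁ : ‖wstar‖ = 1) (hr : 0 ≤ r)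
    (hu : ‖u‖ ≤ 1) : r * σ - (1 - σ) ≤ ‖rpgdDirection A r wstar u‖ := by
  obtain ⟨y, hy, z, hz, rfl⟩ :=
    Submodule.exists_add_mem_mem_orthogonal (K := LinearMap.ker (A : E →ₗ[ℝ] F)) u
  have hσ₁ : σ ≤ 1 := by
    have := hσ wstar hw
    have := hA wstar
    rw [hw₁] at *
    nlinarith [norm_nonneg (A wstar)]
  have hz₁ : ‖z‖ ≤ 1 := (Submodule.norm_le_norm_add_of_mem_orthogonal hy hz).trans hu
  have hsplit : rpgdDirection A r wstar (y + z) = y + rpgdDirection A r wstar z := by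
    simp only [rpgdDirection, map_add, show A y = 0 from hy, map_zero]
    abel
  have hmem : rpgdDirection A r wstar z ∈ (LinearMap.ker (A : E →ₗ[ℝ] F))ᗮ :=
    Submodule.add_mem _ (Submodule.sub_mem _ hz (A.adjoint_apply_mem_orthogonal_ker _))
      (Submodule.smul_mem _ _ (A.adjoint_apply_mem_orthogonal_ker _))
  calc r * σ - (1 - σ) ≤ ‖r • (A†) (A wstar)‖ - ‖z - (A†) (A z)‖ := by
        rw [norm_smul, Real.norm_of_nonneg hr]
        have := A.mul_norm_le_norm_adjoint_apply hσ hw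
        have := A.norm_sub_adjoint_apply_le hA hσ hz
        rw [hw₁] at *
        nlinarith
    _ ≤ ‖rpgdDirection A r wstar z‖ := by
        have h := norm_add_le (rpgdDirection A r wstar z) (-(z - (A†) (A z)))
        rw [rpgdDirection, add_neg_cancel_comm, norm_neg] at h
        exact sub_le_iff_le_add.mpr h
    _ ≤ ‖rpgdDirection A r wstar (y + z)‖ :=
        hsplit ▸ Submodule.norm_le_norm_add_of_mem_orthogonal hy hmem

end Direction

theorem norm_eq_one_of_eq_inv_norm_smul {E : Type*} [NormedAddCommGroup E] [NormedSpace ℝ E]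
    {w v : ℕ → E} (hw₀ : ‖w 0‖ = 1) (hrec : ∀ t, w (t + 1) = ‖v t‖⁻¹ • v t)
    (hv : ∀ t, ‖w t‖ = 1 → v t ≠ 0) : ∀ t, ‖w t‖ = 1
  | 0 => hw₀
  | t + 1 => hrec t ▸ norm_smul_inv_norm (hv t (norm_eq_one_of_eq_inv_norm_smul hw₀ hrec hv t))

theorem norm_map_inv_norm_smul_le {E G : Type*} [NormedAddCommGroup E] [NormedSpace ℝ E]
    [NormedAddCommGroup G] [NormedSpace ℝ G] (P : E →L[ℝ] G) {q : ℝ} (hq : 0 < q) {x : E}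
    (hx : q ≤ ‖x‖) : ‖P (‖x‖⁻¹ • x)‖ ≤ q⁻¹ * ‖P x‖ := by
  rw [map_smul, norm_smul, norm_inv, norm_norm]
  gcongr

theorem inv_pow_mul_le_of_log_div_log_le {q N ε : ℝ} {T : ℕ} (hq : 1 < q) (hN : 0 ≤ N)
    (hε : 0 < ε) (hT : Real.log (N / ε) / Real.log q ≤ T) : q⁻¹ ^ T * N ≤ ε := by
  rcases hN.eq_or_lt with rfl | hN
  · simpa using hε.le
  have hNε : N / ε ≤ q ^ T := by
    rw [← Real.log_le_log_iff (div_pos hN hε) (by positivity), Real.log_pow]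
    rwa [div_le_iff₀ (Real.log_pos hq)] at hT
  rw [inv_pow, inv_mul_le_iff₀ (by positivity)]
  rwa [div_le_iff₀ hε] at hNε

/-- For a general matrix `A` with `λ_max(AAᵀ) = 1` (i.e. `‖Az‖ ≤ ‖z‖`) and
smallest row-space eigenvalue `σ_m > 0` (`σ_m‖z‖² ≤ ‖Az‖²` on the row space), a unit `w*`
in the row space, `g* > 0`, and `δ > 0`: in rPGD with fixed `g = g_0 ≤ g*σ_m/(2+δ−σ_m)`
and stepsize `η = 1/g_0²`, the vector `v_t = (I − AᵀA)w_t + (g*/g_0)AᵀA w*` has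
`‖v_t‖ ≥ 1 + δ` for every unit `w_t`; consequently
`‖w_{T}^⊥‖ ≤ (1+δ)^{−T}‖w_0^⊥‖`, and `‖w_{T₁}^⊥‖ ≤ ε` whenever
`T₁ ≥ log(‖w_0^⊥‖/ε)/log(1+δ)`. -/
theorem stmt18 (m d : ℕ)
    (A : EuclideanSpace ℝ (Fin d) →L[ℝ] EuclideanSpace ℝ (Fin m))
    (hmax : ∀ z : EuclideanSpace ℝ (Fin d), ‖A z‖ ≤ ‖z‖)
    (σm : ℝ) (hσm : 0 < σm)
    (hmin : ∀ z ∈ (LinearMap.ker (A : EuclideanSpace ℝ (Fin d) →ₗ[ℝ] EuclideanSpace ℝ (Fin m)))ᗮ, σm * ‖z‖^2 ≤ ‖A z‖^2)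
    (gstar : ℝ) (hgs : 0 < gstar)
    (wstar : EuclideanSpace ℝ (Fin d)) (hws : ‖wstar‖ = 1)
    (hwsrow : wstar ∈ (LinearMap.ker (A : EuclideanSpace ℝ (Fin d) →ₗ[ℝ] EuclideanSpace ℝ (Fin m)))ᗮ)
    (δ : ℝ) (hδ : 0 < δ)
    (g0 : ℝ) (hg0 : 0 < g0) (hg0le : g0 ≤ gstar * σm / (2 + δ - σm))
    (w : ℕ → EuclideanSpace ℝ (Fin d))
    (v : ℕ → EuclideanSpace ℝ (Fin d))
    (hw0 : ‖w 0‖ = 1)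
    (hv : ∀ t, v t = (w t - (ContinuousLinearMap.adjoint A) (A (w t))) +
      (gstar / g0) • (ContinuousLinearMap.adjoint A) (A wstar))
    (hrec : ∀ t, w (t + 1) = ‖v t‖⁻¹ • v t) :
    (∀ u : EuclideanSpace ℝ (Fin d), ‖u‖ = 1 →
      1 + δ ≤ ‖(u - (ContinuousLinearMap.adjoint A) (A u)) +
        (gstar / g0) • (ContinuousLinearMap.adjoint A) (A wstar)‖) ∧
    (∀ T : ℕ,
      ‖(Submodule.orthogonalProjectionOnto (LinearMap.ker (A : EuclideanSpace ℝ (Fin d) →ₗ[ℝ] EuclideanSpace ℝ (Fin m))) (w T) : EuclideanSpace ℝ (Fin d))‖ ≤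
        ((1 + δ)⁻¹) ^ T *
          ‖(Submodule.orthogonalProjectionOnto (LinearMap.ker (A : EuclideanSpace ℝ (Fin d) →ₗ[ℝ] EuclideanSpace ℝ (Fin m))) (w 0) : EuclideanSpace ℝ (Fin d))‖) ∧
    (∀ ε : ℝ, 0 < ε → ∀ T₁ : ℕ,
      Real.log
          (‖(Submodule.orthogonalProjectionOnto (LinearMap.ker (A : EuclideanSpace ℝ (Fin d) →ₗ[ℝ] EuclideanSpace ℝ (Fin m))) (w 0) : EuclideanSpace ℝ (Fin d))‖ / ε) /
          Real.log (1 + δ) ≤ (T₁ : ℝ) →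
      ‖(Submodule.orthogonalProjectionOnto (LinearMap.ker (A : EuclideanSpace ℝ (Fin d) →ₗ[ℝ] EuclideanSpace ℝ (Fin m))) (w T₁) : EuclideanSpace ℝ (Fin d))‖ ≤ ε) := by
  set K := LinearMap.ker (A : EuclideanSpace ℝ (Fin d) →ₗ[ℝ] EuclideanSpace ℝ (Fin m))
  have hr : 1 + δ ≤ gstar / g0 * σm - (1 - σm) := by
    have hden : 0 < 2 + δ - σm := by
      by_contra! h
      exact hg0.not_ge (hg0le.trans (div_nonpos_of_nonneg_of_nonpos (by positivity) h))
    rw [le_div_iff₀ hden] at hg0le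
    rw [div_mul_eq_mul_div, le_sub_iff_add_le, le_div_iff₀ hg0]
    linarith
  have hdir : ∀ u : EuclideanSpace ℝ (Fin d), ‖u‖ = 1 →
      1 + δ ≤ ‖rpgdDirection A (gstar / g0) wstar u‖ := fun u hu =>
    hr.trans (mul_sub_le_norm_rpgdDirection hmax hmin hwsrow hws (by positivity) hu.le)
  have hv' : ∀ t, v t = rpgdDirection A (gstar / g0) wstar (w t) := hv
  have hunit : ∀ t, ‖w t‖ = 1 := norm_eq_one_of_eq_inv_norm_smul hw0 hrec fun t ht =>
    norm_pos_iff.mp (by rw [hv']; linarith [hdir _ ht])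
  have hvt : ∀ t, 1 + δ ≤ ‖v t‖ := fun t => hv' t ▸ hdir _ (hunit t)
  have hgeom : ∀ T : ℕ, ‖(K.orthogonalProjectionOnto (w T) : EuclideanSpace ℝ (Fin d))‖ ≤
      (1 + δ)⁻¹ ^ T * ‖(K.orthogonalProjectionOnto (w 0) : EuclideanSpace ℝ (Fin d))‖ :=
    fun T => le_geom (u := fun t => ‖K.orthogonalProjectionOnto (w t)‖) (by positivity) T
      fun t _ => by
        rw [hrec t, ← orthogonalProjectionOnto_ker_rpgdDirection (gstar / g0) wstar (w t), ← hv' t]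
        exact norm_map_inv_norm_smul_le K.orthogonalProjectionOnto (by positivity) (hvt t)
  exact ⟨hdir, hgeom, fun ε hε T hT =>
    (hgeom T).trans (inv_pow_mul_le_of_log_div_log_le (by linarith) (norm_nonneg _) hε hT)⟩
end
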